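/- Let Δ and Δ' be two semicomplete weakly distance-regular digraphs of girth 2 with the same intersection numbers. Then the Cartesian product Δ□Δ' is a weakly distance-regular digraph. -/

import Mathlib

namespace Paper

/-- A digraph: a set of vertices together with a set of arcs (ordered pairs of
distinct vertices). -/
structure Digraph (V : Type*) where
  Adj : V → V → Prop
  loopless : ∀ v : V, ¬ Adj v v

variable {V V' : Type*}

namespace Digraph

/-- There is a directed walk of length `n` from `x` to `y`. -/
def HasPath (G : Digraph V) (x y : V) (n : ℕ) : Prop :=
  ∃ f : ℕ → V, f 0 = x ∧ f n = y ∧ ∀ k < n, G.Adj (f k) (f (k + 1))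

/-- The distance `∂(x,y)`: the length of a shortest directed path from `x` to `y`. -/
noncomputable def dist (G : Digraph V) (x y : V) : ℕ :=
  sInf {n | G.HasPath x y n}

/-- The two-way distance `∂̃(x,y) = (∂(x,y), ∂(y,x))`. -/
noncomputable def tdist (G : Digraph V) (x y : V) : ℕ × ℕ :=
  (G.dist x y, G.dist y x)

/-- The two-way distance set `∂̃(Γ)`. -/
def tdSet (G : Digraph V) : Set (ℕ × ℕ) :=
  {p | ∃ x y : V, G.tdist x y = p}

def StronglyConnected (G : Digraph V) : Prop :=
  ∀ x y : V, ∃ n, G.HasPath x y n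

/-- `P_{ĩ,j̃}(x,y)`: the set of `z` with `∂̃(x,z) = ĩ` and `∂̃(z,y) = j̃`. -/
def P (G : Digraph V) (i j : ℕ × ℕ) (x y : V) : Set V :=
  {z | G.tdist x z = i ∧ G.tdist z y = j}

open Classical in
/-- The intersection number `p^{h̃}_{ĩ,j̃}`, defined using an arbitrarily chosen
pair at two-way distance `h̃` (and `0` if there is no such pair). -/
noncomputable def p (G : Digraph V) (h i j : ℕ × ℕ) : ℕ :=
  if hh : ∃ xy : V × V, G.tdist xy.1 xy.2 = h then
    Nat.card (G.P i j hh.choose.1 hh.choose.2)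
  else 0

/-- A weakly distance-regular digraph: strongly connected, and
`|P_{ĩ,j̃}(x,y)|` depends only on `∂̃(x,y)`, `ĩ` and `j̃`. -/
def IsWDR (G : Digraph V) : Prop :=
  G.StronglyConnected ∧
    ∀ (i j : ℕ × ℕ) (x y : V), Nat.card (G.P i j x y) = G.p (G.tdist x y) i j

/-- Commutativity: `p^{h̃}_{ĩ,j̃} = p^{h̃}_{j̃,ĩ}` for all `h̃,ĩ,j̃ ∈ ∂̃(Γ)`. -/
def IsCommutative (G : Digraph V) : Prop :=
  ∀ h i j : ℕ × ℕ, h ∈ G.tdSet → i ∈ G.tdSet → j ∈ G.tdSet → G.p h i j = G.p h j i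

/-- `Γ` is an undirected graph, i.e. its arc set is symmetric. -/
def IsUndirected (G : Digraph V) : Prop :=
  ∀ x y : V, G.Adj x y → G.Adj y x

def IsSemicomplete (G : Digraph V) : Prop :=
  ∀ x y : V, x ≠ y → (G.Adj x y ∨ G.Adj y x)

/-- `Γ` is a complete (undirected) graph. -/
def IsCompleteDigraph (G : Digraph V) : Prop :=
  ∀ x y : V, x ≠ y → (G.Adj x y ∧ G.Adj y x)

/-- The underlying graph of a digraph. -/
def underlying (G : Digraph V) : SimpleGraph V where
  Adj x y := G.Adj x y ∨ G.Adj y x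
  symm := ⟨fun _ _ h => h.symm⟩
  loopless := ⟨fun x h => h.elim (G.loopless x) (G.loopless x)⟩

/-- The diameter: the maximum value of the distance function. -/
noncomputable def diameter (G : Digraph V) : ℕ :=
  sSup {n | ∃ x y : V, G.dist x y = n}

/-- The girth: the length of a shortest circuit. -/
noncomputable def girth (G : Digraph V) : ℕ :=
  sInf {n | 0 < n ∧ ∃ x : V, G.HasPath x x n}

/-- Number of out-neighbours `d⁺(x)`. -/
noncomputable def outDeg (G : Digraph V) (x : V) : ℕ := Nat.card {y | G.Adj x y}

/-- Number of in-neighbours `d⁻(x)`. -/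
noncomputable def inDeg (G : Digraph V) (x : V) : ℕ := Nat.card {y | G.Adj y x}

def IsIsomorphicTo (G : Digraph V) (G' : Digraph V') : Prop :=
  ∃ e : V ≃ V', ∀ x y : V, G.Adj x y ↔ G'.Adj (e x) (e y)

/-- The Cartesian product of two digraphs. -/
def box (G : Digraph V) (G' : Digraph V') : Digraph (V × V') where
  Adj x y := (x.1 = y.1 ∧ G'.Adj x.2 y.2) ∨ (G.Adj x.1 y.1 ∧ x.2 = y.2)
  loopless := fun v h => h.elim (fun h' => G'.loopless v.2 h'.2) (fun h' => G.loopless v.1 h'.1)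

/-- Two digraphs have the same intersection numbers. -/
def SameIntersectionNumbers (G : Digraph V) (G' : Digraph V') : Prop :=
  G.tdSet = G'.tdSet ∧
    ∀ h i j : ℕ × ℕ, h ∈ G.tdSet → i ∈ G.tdSet → j ∈ G.tdSet → G.p h i j = G'.p h i j

/-- Induced subdigraph on a set of vertices. -/
def induce (G : Digraph V) (s : Set V) : Digraph s where
  Adj x y := G.Adj x.1 y.1
  loopless := fun v h => G.loopless v.1 h

end Digraph

/-- The Cartesian product of a family of digraphs. -/
def piBox {ι : Type*} {W : ι → Type*} (G : ∀ i, Digraph (W i)) : Digraph (∀ i, W i) where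
  Adj x y := ∃ i, (G i).Adj (x i) (y i) ∧ ∀ j, j ≠ i → x j = y j
  loopless := by
    rintro v ⟨i, hi, -⟩
    exact (G i).loopless _ hi

/-- The Cayley digraph `Cay(A,S)` of an additive group (for `S ⊆ A ∖ {0}`). -/
def Cay (A : Type*) [AddGroup A] (S : Set A) : Digraph A where
  Adj x y := x ≠ y ∧ y - x ∈ S
  loopless := fun _ h => h.1 rfl

/-- The Cayley graph of an additive group with respect to a symmetric connection set. -/
def cayleyGraph (A : Type*) [AddGroup A] (S : Set A) : SimpleGraph A where
  Adj x y := x ≠ y ∧ (y - x ∈ S ∨ x - y ∈ S)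
  symm := ⟨fun _ _ h => ⟨h.1.symm, h.2.symm⟩⟩
  loopless := ⟨fun _ h => h.1 rfl⟩

/-- The Hamming graph `H(ι, S)`: vertices are tuples, adjacent iff they differ in
exactly one coordinate. -/
def hammingGraph (ι : Type*) (S : Type*) : SimpleGraph (ι → S) where
  Adj x y := ∃ i, x i ≠ y i ∧ ∀ j, j ≠ i → x j = y j
  symm := by
    refine ⟨?_⟩
    rintro x y ⟨i, h1, h2⟩
    exact ⟨i, h1.symm, fun j hj => (h2 j hj).symm⟩
  loopless := by
    refine ⟨?_⟩
    rintro x ⟨i, h1, -⟩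
    exact h1 rfl

/-- The folded `n`-cube: vertices are `(n-1)`-tuples over `ℤ₂`, adjacent iff they
differ in exactly one coordinate or in all `n-1` coordinates. -/
def foldedCube (n : ℕ) : SimpleGraph (Fin (n - 1) → ZMod 2) where
  Adj x y := (∃ i, x i ≠ y i ∧ ∀ j, j ≠ i → x j = y j) ∨ (x ≠ y ∧ ∀ j, x j ≠ y j)
  symm := by
    refine ⟨?_⟩
    rintro x y (⟨i, h1, h2⟩ | ⟨h1, h2⟩)
    · exact Or.inl ⟨i, h1.symm, fun j hj => (h2 j hj).symm⟩
    · exact Or.inr ⟨h1.symm, fun j => (h2 j).symm⟩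
  loopless := by
    refine ⟨?_⟩
    rintro x (⟨i, h1, -⟩ | ⟨h1, -⟩)
    · exact h1 rfl
    · exact h1 rfl

/-- The Cartesian product of a family of simple graphs. -/
def piBoxGraph {ι : Type*} {W : ι → Type*} (G : ∀ i, SimpleGraph (W i)) :
    SimpleGraph (∀ i, W i) where
  Adj x y := ∃ i, (G i).Adj (x i) (y i) ∧ ∀ j, j ≠ i → x j = y j
  symm := by
    refine ⟨?_⟩
    rintro x y ⟨i, h1, h2⟩
    exact ⟨i, SimpleGraph.Adj.symm h1, fun j hj => (h2 j hj).symm⟩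
  loopless := by
    refine ⟨?_⟩
    rintro x ⟨i, h1, -⟩
    exact (G i).loopless.irrefl _ h1

/-- The Shrikhande graph `Cay(ℤ₄ × ℤ₄, {±(1,0), ±(0,1), ±(1,1)})`. -/
def shrikhande : SimpleGraph (ZMod 4 × ZMod 4) :=
  cayleyGraph (ZMod 4 × ZMod 4) {(1, 0), (-1, 0), (0, 1), (0, -1), (1, 1), (-1, -1)}

/-- The Doob graph `G(d₁, d₂)`: the Cartesian product of `d₁` copies of the
Shrikhande graph with the Hamming graph `H(d₂, 4)`. -/
def doobGraph (d₁ d₂ : ℕ) :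
    SimpleGraph ((Fin d₁ → ZMod 4 × ZMod 4) × (Fin d₂ → ZMod 4)) :=
  (piBoxGraph fun _ : Fin d₁ => shrikhande).boxProd (hammingGraph (Fin d₂) (ZMod 4))

/-- `c_i(x,y)`: the number of neighbours of `y` at distance `i - 1` from `x`. -/
noncomputable def cNum (G : SimpleGraph V) (i : ℕ) (x y : V) : ℕ :=
  Nat.card {z : V | G.Adj y z ∧ G.dist x z = i - 1}

/-- `a_i(x,y)`: the number of neighbours of `y` at distance `i` from `x`. -/
noncomputable def aNum (G : SimpleGraph V) (i : ℕ) (x y : V) : ℕ :=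
  Nat.card {z : V | G.Adj y z ∧ G.dist x z = i}

/-- `b_i(x,y)`: the number of neighbours of `y` at distance `i + 1` from `x`. -/
noncomputable def bNum (G : SimpleGraph V) (i : ℕ) (x y : V) : ℕ :=
  Nat.card {z : V | G.Adj y z ∧ G.dist x z = i + 1}

/-- A distance-regular graph. -/
def IsDRG (G : SimpleGraph V) : Prop :=
  G.Connected ∧
    ∀ (i : ℕ) (x y x' y' : V), G.dist x y = i → G.dist x' y' = i →
      cNum G i x y = cNum G i x' y' ∧ bNum G i x y = bNum G i x' y'

/-- A distance-transitive graph. -/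
def IsDistanceTransitive (G : SimpleGraph V) : Prop :=
  G.Connected ∧
    ∀ x y x' y' : V, G.dist x y = G.dist x' y' → ∃ σ : G ≃g G, σ x = x' ∧ σ y = y'

/-- The vertex set of `Γ_i(α)`: all tuples obtained from `α` by inserting an
arbitrary element of `S` in the `i`-th coordinate. -/
def lineSet {n : ℕ} {S : Type*} (i : Fin (n + 1)) (α : Fin n → S) : Set (Fin (n + 1) → S) :=
  Set.range fun b : S => i.insertNth b α

/-- The induced subdigraph `Γ_i(α)`. -/
def Digraph.line {n : ℕ} {S : Type*} (Γ : Digraph (Fin (n + 1) → S)) (i : Fin (n + 1))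
    (α : Fin n → S) : Digraph (lineSet i α) :=
  Γ.induce (lineSet i α)

/-- Pad a tuple of length `m` with the entry `o` to a tuple of length `d`. -/
def pad {S : Type*} (o : S) (d m : ℕ) (α : Fin m → S) : Fin d → S :=
  fun j => if h : j.1 < m then α ⟨j.1, h⟩ else o

/-- The digraph `Γ^{[m]}` on `S^m`: `(α,β)` is an arc iff the padded tuples form
an arc of `Γ`. -/
def Digraph.trunc {S : Type*} {d : ℕ} (Γ : Digraph (Fin d → S)) (o : S) (m : ℕ) :
    Digraph (Fin m → S) where
  Adj α β := Γ.Adj (pad o d m α) (pad o d m β)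
  loopless := fun _ h => Γ.loopless _ h

/-- The digraph `Γ^i` on `S`: `(a,b)` is an arc iff the tuples with `a` resp. `b`
in the `i`-th coordinate and `o` elsewhere form an arc of `Γ`. -/
def Digraph.coordDigraph {S : Type*} {d : ℕ} (Γ : Digraph (Fin d → S)) (o : S) (i : Fin d) :
    Digraph S where
  Adj a b := Γ.Adj (Function.update (fun _ => o) i a) (Function.update (fun _ => o) i b)
  loopless := fun _ h => Γ.loopless _ h

/-- The set `T = S^{m-1} × {(o,…,o)}` (as a subset of `S^{d-1}`, here `d = n+1`). -/
def Tset {n : ℕ} (S : Type*) (o : S) (m : ℕ) : Set (Fin n → S) :=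
  {α | ∀ j : Fin n, m - 1 ≤ j.1 → α j = o}

end Paper

/-!
In a finite weakly distance-regular digraph the in-degree is constant; with semicompleteness
this forces `∂(v,u) ≤ 2` for every arc `u → v`, so all two-way distances lie in
`{(0,0), (1,1), (1,2), (2,1)}`. In `Δ □ Δ'` two-way distances add, and a sum of two elements of
that set determines the summands up to order. The sets `P_{ĩ,j̃}(x,y)` are the fibres of
`z ↦ (∂̃(x,z), ∂̃(z,y))` and their sizes are intersection numbers, so two pairs with the same
two-way distance (in `Δ` or in `Δ'`) admit a bijection of vertex sets transporting this map.
A product of two such bijections, followed by exchanging the factors if the summands were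
exchanged, carries `P_{ĩ,j̃}(X,Y)` onto `P_{ĩ,j̃}(X₀,Y₀)`.
-/

theorem Equiv.exists_comp_eq_of_card_fiber_eq {α β γ : Type*} [Finite α] [Finite β]
    {f : α → γ} {g : β → γ} (h : ∀ c, Nat.card {a // f a = c} = Nat.card {b // g b = c}) :
    ∃ e : α ≃ β, ∀ a, g (e a) = f a :=
  ⟨Equiv.ofFiberEquiv fun c => (Finite.card_eq.mp (h c)).some, Equiv.ofFiberEquiv_map _⟩

namespace Paper.Digraph

variable {V V' W : Type*}

section Paths

variable {G : Digraph V} {x y : V} {n : ℕ}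

theorem hasPath_zero_iff : G.HasPath x y 0 ↔ x = y :=
  ⟨fun ⟨f, h0, h1, _⟩ => h0 ▸ h1, fun h => ⟨fun _ => x, rfl, h, fun _ hk => absurd hk (by omega)⟩⟩

theorem hasPath_succ_iff : G.HasPath x y (n + 1) ↔ ∃ u, G.Adj x u ∧ G.HasPath u y n := by
  constructor
  · rintro ⟨f, h0, hn, hf⟩
    exact ⟨f 1, h0 ▸ hf 0 (by omega), f ∘ (· + 1), rfl, hn, fun k hk => hf (k + 1) (by omega)⟩
  · rintro ⟨u, hxu, f, h0, hn, hf⟩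
    refine ⟨fun | 0 => x | k + 1 => f k, rfl, hn, fun k hk => ?_⟩
    cases k with
    | zero => simpa [h0] using hxu
    | succ k => exact hf k (by omega)

theorem hasPath_one_iff : G.HasPath x y 1 ↔ G.Adj x y := by
  simp [hasPath_succ_iff, hasPath_zero_iff]

theorem HasPath.trans {z : V} {m : ℕ} (hxy : G.HasPath x y n) (hyz : G.HasPath y z m) :
    G.HasPath x z (n + m) := by
  induction n generalizing x with
  | zero => rwa [hasPath_zero_iff.mp hxy, Nat.zero_add]
  | succ n ih =>
    obtain ⟨u, hxu, huy⟩ := hasPath_succ_iff.mp hxy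
    rw [Nat.add_right_comm]
    exact hasPath_succ_iff.mpr ⟨u, hxu, ih huy⟩

theorem HasPath.map {H : Digraph W} {φ : V → W} (hφ : ∀ a b, G.Adj a b → H.Adj (φ a) (φ b))
    (h : G.HasPath x y n) : H.HasPath (φ x) (φ y) n := by
  obtain ⟨f, h0, hn, hf⟩ := h
  exact ⟨φ ∘ f, by simp [h0], by simp [hn], fun k hk => hφ _ _ (hf k hk)⟩

theorem dist_le (h : G.HasPath x y n) : G.dist x y ≤ n :=
  Nat.sInf_le h

theorem hasPath_dist (hG : G.StronglyConnected) (x y : V) : G.HasPath x y (G.dist x y) :=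
  Nat.sInf_mem (hG x y)

theorem dist_self (x : V) : G.dist x x = 0 :=
  Nat.le_zero.mp (dist_le (hasPath_zero_iff.mpr rfl))

theorem dist_eq_zero_iff (hG : G.StronglyConnected) : G.dist x y = 0 ↔ x = y :=
  ⟨fun h => hasPath_zero_iff.mp (h ▸ hasPath_dist hG x y), fun h => h ▸ dist_self x⟩

theorem dist_eq_one_iff (hG : G.StronglyConnected) : G.dist x y = 1 ↔ G.Adj x y := by
  refine ⟨fun h => hasPath_one_iff.mp (h ▸ hasPath_dist hG x y), fun h => ?_⟩
  have hle : G.dist x y ≤ 1 := dist_le (hasPath_one_iff.mpr h)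
  have hne : G.dist x y ≠ 0 := fun h0 => G.loopless x ((dist_eq_zero_iff hG).mp h0 ▸ h)
  omega

theorem dist_le_two {z : V} (hxz : G.Adj x z) (hzy : G.Adj z y) : G.dist x y ≤ 2 :=
  dist_le ((hasPath_one_iff.mpr hxz).trans (hasPath_one_iff.mpr hzy))

end Paths

noncomputable def profile (G : Digraph V) (x y z : V) : (ℕ × ℕ) × (ℕ × ℕ) :=
  (G.tdist x z, G.tdist z y)

theorem setOf_profile_eq (G : Digraph V) (i j : ℕ × ℕ) (x y : V) :
    {z | G.profile x y z = (i, j)} = G.P i j x y := by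
  ext z
  simp [profile, P]

theorem card_P_eq_of_profile_comp {G : Digraph V} {G' : Digraph V'} {x y : V} {x' y' : V'}
    (e : V ≃ V') (he : ∀ z, G'.profile x' y' (e z) = G.profile x y z) (i j : ℕ × ℕ) :
    Nat.card (G.P i j x y) = Nat.card (G'.P i j x' y') := by
  rw [← setOf_profile_eq, ← setOf_profile_eq]
  exact Nat.card_congr (e.subtypeEquiv fun z => by simp only [Set.mem_ofPred_eq, he])

section Box

variable {Δ : Digraph V} {Δ' : Digraph V'}

theorem box_hasPath_iff {n : ℕ} {x y : V} {x' y' : V'} :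
    (Δ.box Δ').HasPath (x, x') (y, y') n ↔
      ∃ a b, a + b = n ∧ Δ.HasPath x y a ∧ Δ'.HasPath x' y' b := by
  constructor
  · induction n generalizing x x' with
    | zero =>
      intro h
      obtain ⟨rfl, rfl⟩ := Prod.mk.inj (hasPath_zero_iff.mp h)
      exact ⟨0, 0, rfl, hasPath_zero_iff.mpr rfl, hasPath_zero_iff.mpr rfl⟩
    | succ n ih =>
      intro h
      obtain ⟨⟨u, u'⟩, hstep, hu⟩ := hasPath_succ_iff.mp h
      obtain ⟨a, b, hab, ha, hb⟩ := ih hu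
      rcases hstep with ⟨rfl, hxu⟩ | ⟨hxu, rfl⟩
      · exact ⟨a, b + 1, by omega, ha, hasPath_succ_iff.mpr ⟨u', hxu, hb⟩⟩
      · exact ⟨a + 1, b, by omega, hasPath_succ_iff.mpr ⟨u, hxu, ha⟩, hb⟩
  · rintro ⟨a, b, rfl, ha, hb⟩
    exact (ha.map (H := Δ.box Δ') (φ := (·, x')) fun _ _ h => Or.inr ⟨h, rfl⟩).trans
      (hb.map (H := Δ.box Δ') (φ := (y, ·)) fun _ _ h => Or.inl ⟨rfl, h⟩)

theorem StronglyConnected.box (hΔ : Δ.StronglyConnected) (hΔ' : Δ'.StronglyConnected) :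
    (Δ.box Δ').StronglyConnected := by
  rintro ⟨x, x'⟩ ⟨y, y'⟩
  obtain ⟨a, ha⟩ := hΔ x y
  obtain ⟨b, hb⟩ := hΔ' x' y'
  exact ⟨a + b, box_hasPath_iff.mpr ⟨a, b, rfl, ha, hb⟩⟩

theorem box_dist (hΔ : Δ.StronglyConnected) (hΔ' : Δ'.StronglyConnected) (x y : V)
    (x' y' : V') : (Δ.box Δ').dist (x, x') (y, y') = Δ.dist x y + Δ'.dist x' y' := by
  refine le_antisymm (dist_le (box_hasPath_iff.mpr
    ⟨_, _, rfl, hasPath_dist hΔ x y, hasPath_dist hΔ' x' y'⟩)) ?_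
  obtain ⟨a, b, hab, ha, hb⟩ := box_hasPath_iff.mp (hasPath_dist (hΔ.box hΔ') (x, x') (y, y'))
  have := dist_le ha
  have := dist_le hb
  omega

theorem box_tdist (hΔ : Δ.StronglyConnected) (hΔ' : Δ'.StronglyConnected) (x y : V)
    (x' y' : V') : (Δ.box Δ').tdist (x, x') (y, y') = Δ.tdist x y + Δ'.tdist x' y' := by
  simp only [tdist, box_dist hΔ hΔ', Prod.mk_add_mk]

theorem box_profile (hΔ : Δ.StronglyConnected) (hΔ' : Δ'.StronglyConnected) (x y z : V)
    (x' y' z' : V') :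
    (Δ.box Δ').profile (x, x') (y, y') (z, z') = Δ.profile x y z + Δ'.profile x' y' z' := by
  simp only [profile, box_tdist hΔ hΔ', Prod.mk_add_mk]

end Box

theorem exists_equiv_profile_comp [Finite V] [Finite V'] {G : Digraph V} {G' : Digraph V'}
    (hG : G.IsWDR) (hG' : G'.IsWDR) (hp : G.p = G'.p) {x y : V} {x' y' : V'}
    (hxy : G.tdist x y = G'.tdist x' y') :
    ∃ e : V ≃ V', ∀ z, G'.profile x' y' (e z) = G.profile x y z := by
  refine Equiv.exists_comp_eq_of_card_fiber_eq fun ⟨i, j⟩ => ?_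
  change Nat.card {z | G.profile x y z = (i, j)} = Nat.card {z | G'.profile x' y' z = (i, j)}
  rw [setOf_profile_eq, setOf_profile_eq, hG.2, hG'.2, hp, hxy]

theorem IsWDR.inDeg_eq [Finite V] {G : Digraph V} (hG : G.IsWDR) (u v : V) :
    G.inDeg u = G.inDeg v := by
  obtain ⟨e, he⟩ := exists_equiv_profile_comp hG hG rfl (x := u) (y := u) (x' := v) (y' := v)
    (by simp [tdist, dist_self])
  have hadj : ∀ w z, G.Adj z w ↔ (G.profile w w z).2.1 = 1 := fun w z =>
    (dist_eq_one_iff hG.1).symm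
  exact Nat.card_congr (e.subtypeEquiv fun z => by simp only [Set.mem_ofPred_eq, hadj, he])

/-- An arc `u → v` with `∂(v,u) ≥ 3` would make every in-neighbour of `u`, and `u` itself,
an in-neighbour of `v`, contradicting the constant in-degree. -/
theorem IsWDR.dist_le_two_of_adj [Finite V] {G : Digraph V} (hsc : G.IsSemicomplete)
    (hG : G.IsWDR) {u v : V} (huv : G.Adj u v) : G.dist v u ≤ 2 := by
  by_contra! hvu
  have hsub : insert u {z | G.Adj z u} ⊆ {z | G.Adj z v} := by
    rintro z (rfl | hzu)
    · exact huv
    · have hzv : z ≠ v := by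
        rintro rfl
        rw [(dist_eq_one_iff hG.1).mpr hzu] at hvu
        omega
      exact (hsc z v hzv).resolve_right fun hvz => (dist_le_two hvz hzu).not_gt hvu
  have hcard := Set.ncard_le_ncard hsub (Set.toFinite _)
  rw [Set.ncard_insert_of_notMem (s := {z | G.Adj z u}) (G.loopless u) (Set.toFinite _)] at hcard
  have hdeg := hG.inDeg_eq u v
  simp only [inDeg, Nat.card_coe_set_eq] at hdeg
  omega

def semicompleteTDists : Finset (ℕ × ℕ) := {(0, 0), (1, 1), (1, 2), (2, 1)}

theorem eq_or_swap_of_add_eq_add_of_mem_semicompleteTDists :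
    ∀ a ∈ semicompleteTDists, ∀ b ∈ semicompleteTDists, ∀ c ∈ semicompleteTDists,
      ∀ d ∈ semicompleteTDists, a + b = c + d → (c = a ∧ d = b) ∨ (c = b ∧ d = a) := by
  decide

theorem IsWDR.tdist_mem_semicompleteTDists [Finite V] {G : Digraph V}
    (hsc : G.IsSemicomplete) (hG : G.IsWDR) (x y : V) :
    G.tdist x y ∈ semicompleteTDists := by
  rcases eq_or_ne x y with rfl | hne
  · simp [tdist, dist_self, semicompleteTDists]
  have hxy : G.dist x y ≠ 0 := fun h => hne ((dist_eq_zero_iff hG.1).mp h)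
  have hyx : G.dist y x ≠ 0 := fun h => hne ((dist_eq_zero_iff hG.1).mp h).symm
  rcases hsc x y hne with h | h <;>
  · have h1 := (dist_eq_one_iff hG.1).mpr h
    have h2 := hG.dist_le_two_of_adj hsc h
    simp only [tdist, semicompleteTDists, Finset.mem_insert, Finset.mem_singleton, Prod.mk.injEq]
    omega

theorem p_eq_zero_of_notMem {G : Digraph V} {h i j : ℕ × ℕ}
    (hm : ¬(h ∈ G.tdSet ∧ i ∈ G.tdSet ∧ j ∈ G.tdSet)) : G.p h i j = 0 := by
  unfold p
  split_ifs with hh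
  · rw [Nat.card_eq_zero]
    refine Or.inl ⟨fun ⟨z, hz⟩ => hm ⟨?_, ⟨_, _, hz.1⟩, ⟨_, _, hz.2⟩⟩⟩
    exact ⟨_, _, hh.choose_spec⟩
  · rfl

theorem SameIntersectionNumbers.p_eq {G : Digraph V} {G' : Digraph V'}
    (hs : G.SameIntersectionNumbers G') : G.p = G'.p := by
  funext h i j
  by_cases hm : h ∈ G.tdSet ∧ i ∈ G.tdSet ∧ j ∈ G.tdSet
  · exact hs.2 h i j hm.1 hm.2.1 hm.2.2
  · rw [p_eq_zero_of_notMem hm, p_eq_zero_of_notMem (hs.1 ▸ hm)]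

/-- The two-way distance `∂̃(x,y) + ∂̃(x',y')` in `Δ □ Δ'` determines its summands up to order,
and exchanging them is harmless because `Δ` and `Δ'` have the same intersection numbers. -/
theorem card_box_P_eq_of_tdist_eq [Finite V] [Finite V'] {Δ : Digraph V} {Δ' : Digraph V'}
    (hsc : Δ.IsSemicomplete) (hΔ : Δ.IsWDR) (hsc' : Δ'.IsSemicomplete) (hΔ' : Δ'.IsWDR)
    (hp : Δ.p = Δ'.p)
    {X Y X₀ Y₀ : V × V'} (h : (Δ.box Δ').tdist X Y = (Δ.box Δ').tdist X₀ Y₀) (i j : ℕ × ℕ) :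
    Nat.card ((Δ.box Δ').P i j X Y) = Nat.card ((Δ.box Δ').P i j X₀ Y₀) := by
  obtain ⟨x, x'⟩ := X
  obtain ⟨y, y'⟩ := Y
  obtain ⟨x₀, x₀'⟩ := X₀
  obtain ⟨y₀, y₀'⟩ := Y₀
  rw [box_tdist hΔ.1 hΔ'.1, box_tdist hΔ.1 hΔ'.1] at h
  have hmem := hΔ.tdist_mem_semicompleteTDists hsc
  have hmem' := hΔ'.tdist_mem_semicompleteTDists hsc'
  rcases eq_or_swap_of_add_eq_add_of_mem_semicompleteTDists _ (hmem x y) _ (hmem' x' y') _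
    (hmem x₀ y₀) _ (hmem' x₀' y₀') h with ⟨h₁, h₂⟩ | ⟨h₁, h₂⟩
  · obtain ⟨e, he⟩ := exists_equiv_profile_comp hΔ hΔ rfl h₁.symm
    obtain ⟨e', he'⟩ := exists_equiv_profile_comp hΔ' hΔ' rfl h₂.symm
    refine card_P_eq_of_profile_comp (e.prodCongr e') (fun ⟨z, z'⟩ => ?_) i j
    simp only [Equiv.prodCongr_apply, Prod.map, box_profile hΔ.1 hΔ'.1, he, he']
  · obtain ⟨e, he⟩ := exists_equiv_profile_comp hΔ hΔ' hp h₂.symm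
    obtain ⟨e', he'⟩ := exists_equiv_profile_comp hΔ' hΔ hp.symm h₁.symm
    refine card_P_eq_of_profile_comp ((e.prodCongr e').trans (Equiv.prodComm _ _))
      (fun ⟨z, z'⟩ => ?_) i j
    simp only [Equiv.trans_apply, Equiv.prodCongr_apply, Prod.map, Equiv.prodComm_apply,
      Prod.swap, box_profile hΔ.1 hΔ'.1, he, he', add_comm]

end Paper.Digraph

open Paper in
theorem prop_box_wdr_general {V V' : Type*} [Finite V] [Finite V']
    (Δ : Paper.Digraph V) (Δ' : Paper.Digraph V')
    (hsc : Δ.IsSemicomplete) (hwdr : Δ.IsWDR)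
    (hsc' : Δ'.IsSemicomplete) (hwdr' : Δ'.IsWDR)
    (hsame : Δ.SameIntersectionNumbers Δ') :
    (Δ.box Δ').IsWDR := by
  refine ⟨hwdr.1.box hwdr'.1, fun i j X Y => ?_⟩
  have hXY : ∃ XY : (V × V') × (V × V'), (Δ.box Δ').tdist XY.1 XY.2 = (Δ.box Δ').tdist X Y :=
    ⟨(X, Y), rfl⟩
  rw [Digraph.p, dif_pos hXY]
  exact Digraph.card_box_P_eq_of_tdist_eq hsc hwdr hsc' hwdr' hsame.p_eq hXY.choose_spec.symm i j

open Paper in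
/-- **Proposition 4.1.** The Cartesian product of two semicomplete weakly
distance-regular digraphs of girth `2` with the same intersection numbers is
weakly distance-regular. -/
theorem prop_box_wdr {V V' : Type*} [Finite V] [Nonempty V] [Finite V'] [Nonempty V']
    (Δ : Paper.Digraph V) (Δ' : Paper.Digraph V')
    (hsc : Δ.IsSemicomplete) (hwdr : Δ.IsWDR) (hg : Δ.girth = 2)
    (hsc' : Δ'.IsSemicomplete) (hwdr' : Δ'.IsWDR) (hg' : Δ'.girth = 2)
    (hsame : Δ.SameIntersectionNumbers Δ') :
    (Δ.box Δ').IsWDR :=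
  prop_box_wdr_general Δ Δ' hsc hwdr hsc' hwdr' hsame
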